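/- arXiv:2211.08663 — 6 statements merged into one kernel-verified Lean document; each statement's English description precedes it below -/
import Mathlib

section
/- Let a, t be complex numbers with |t|^2 > 9|a| > 0. Then the cubic equation 3x^3 - 3tx^2 - 3ax + at = 0 has exactly one root x₀ with |x₀| > |a|^(1/2); the other two roots satisfy |x| < |a|^(1/2). -/
/-!
A root satisfies `3x(x² - a) = t(3x² - a)`. For `√|a| ≤ |x| ≤ 2|t|/3` the right-hand side has
strictly larger modulus than the left (the Rouché comparison), so no root lies in that annulus.
Two distinct roots beyond `2|t|/3` are impossible: the third root `z = t - x - y` satisfies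
`3xyz = -at`, which makes `z` small, and then `xy = -a - (t - z)z` is too small. Finally the
roots multiply to `-at/3`, of modulus `|a||t|/3 > |a|^(3/2)`, so some root lies outside the disc.
-/

open Polynomial

theorem Polynomial.exists_mem_roots_lt_norm {K : Type*} [NormedField K] [IsAlgClosed K]
    {p : K[X]} (hp : p.Monic) {r : ℝ} (h : r ^ p.natDegree < ‖p.coeff 0‖) :
    ∃ x ∈ p.roots, r < ‖x‖ := by
  by_contra! hle
  have hsplit := IsAlgClosed.splits p
  refine h.not_ge ?_
  calc ‖p.coeff 0‖ = (p.roots.map (‖·‖)).prod := by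
        rw [hsplit.coeff_zero_eq_prod_roots_of_monic hp, norm_mul, norm_pow, norm_neg, norm_one,
          one_pow, one_mul]
        exact map_multiset_prod normHom p.roots
    _ ≤ r ^ p.roots.card :=
        Multiset.prod_map_le_pow_card (f := normHom) (fun x _ => norm_nonneg x) hle
    _ = r ^ p.natDegree := by rw [splits_iff_card_roots.mp hsplit]

theorem exists_root_sqrt_norm_lt_norm {a t : ℂ} (ha : 0 < ‖a‖) (hat : 9 * ‖a‖ < ‖t‖ ^ 2) :
    ∃ x : ℂ, 3 * x ^ 3 - 3 * t * x ^ 2 - 3 * a * x + a * t = 0 ∧ √‖a‖ < ‖x‖ := by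
  set q : ℂ[X] := X ^ 3 - C t * X ^ 2 - C a * X + C (a * t / 3)
  have hq : q.Monic := by simp only [q]; monicity!
  have hdeg : q.natDegree = 3 := by simp only [q]; compute_degree!
  have hcoeff : q.coeff 0 = a * t / 3 := by simp [q, coeff_X_pow]
  have hT : 0 < ‖t‖ := by nlinarith [norm_nonneg t]
  have hsqrt : √‖a‖ < ‖t‖ / 3 := (Real.sqrt_lt' (by positivity)).2 (by linarith)
  obtain ⟨x, hx, hlt⟩ := q.exists_mem_roots_lt_norm hq (r := √‖a‖) <| by
    rw [hdeg, hcoeff, norm_div, norm_mul, pow_succ, Real.sq_sqrt ha.le]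
    norm_num
    nlinarith
  refine ⟨x, ?_, hlt⟩
  have hroot : x ^ 3 - t * x ^ 2 - a * x + a * t / 3 = 0 := by
    simpa [q] using (mem_roots hq.ne_zero).mp hx
  linear_combination 3 * hroot

theorem two_thirds_lt_of_sq_le {A T u : ℝ} (hA : 0 < A) (hAT : 9 * A < T ^ 2) (hu : 0 ≤ u)
    (hAu : A ≤ u ^ 2) (h : T * (3 * u ^ 2 - A) ≤ 3 * u * (u ^ 2 + A)) : 2 * T / 3 < u := by
  by_contra! hle
  rcases lt_or_ge u (T / 3) with hsmall | hmid
  · nlinarith [mul_nonneg (sub_nonneg.2 hAu) (by linarith : (0:ℝ) ≤ T - u),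
      mul_pos hA (by linarith : (0:ℝ) < T - 3 * u)]
  · have hT : 0 < T := by nlinarith
    nlinarith [mul_nonneg (by linarith : (0:ℝ) ≤ 3 * u - T)
      (by nlinarith : (0:ℝ) ≤ 2 * T ^ 2 - (3 * u - T) ^ 2),
      mul_pos (by linarith : (0:ℝ) < T ^ 2 - 9 * A) (by linarith : (0:ℝ) < 3 * u + T)]

theorem two_thirds_norm_lt_norm_of_root {a t x : ℂ} (ha : 0 < ‖a‖) (hat : 9 * ‖a‖ < ‖t‖ ^ 2)
    (hx : 3 * x ^ 3 - 3 * t * x ^ 2 - 3 * a * x + a * t = 0) (hr : √‖a‖ ≤ ‖x‖) :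
    2 * ‖t‖ / 3 < ‖x‖ := by
  have hfactor : 3 * x * (x ^ 2 - a) = t * (3 * x ^ 2 - a) := by linear_combination hx
  refine two_thirds_lt_of_sq_le ha hat (norm_nonneg x)
    ((Real.sqrt_le_left (norm_nonneg x)).1 hr) ?_
  calc ‖t‖ * (3 * ‖x‖ ^ 2 - ‖a‖) ≤ ‖t‖ * ‖3 * x ^ 2 - a‖ := by
        gcongr
        have := norm_sub_norm_le (3 * x ^ 2) a
        rw [norm_mul, norm_pow, RCLike.norm_ofNat] at this
        linarith
    _ = ‖3 * x‖ * ‖x ^ 2 - a‖ := by rw [← norm_mul, ← norm_mul, hfactor]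
    _ ≤ 3 * ‖x‖ * (‖x‖ ^ 2 + ‖a‖) := by
        rw [norm_mul, RCLike.norm_ofNat]
        gcongr
        have := norm_sub_le (x ^ 2) a
        rwa [norm_pow] at this

theorem eq_of_roots_of_two_thirds_norm_lt {a t x y : ℂ} (hat : 9 * ‖a‖ < ‖t‖ ^ 2)
    (hx : 3 * x ^ 3 - 3 * t * x ^ 2 - 3 * a * x + a * t = 0)
    (hy : 3 * y ^ 3 - 3 * t * y ^ 2 - 3 * a * y + a * t = 0)
    (hxl : 2 * ‖t‖ / 3 < ‖x‖) (hyl : 2 * ‖t‖ / 3 < ‖y‖) : x = y := by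
  by_contra hne
  have hpair : x ^ 2 + x * y + y ^ 2 - t * (x + y) - a = 0 := by
    refine (mul_eq_zero.1 ?_).resolve_left (sub_ne_zero.2 hne)
    linear_combination (hx - hy) / 3
  set z := t - x - y
  have hprod : 3 * (x * y) * z = -(a * t) := by linear_combination hx - 3 * x * hpair
  have hsum : x * y = -a - (t - z) * z := by linear_combination -hpair
  have hprod_norm : 3 * (‖x‖ * ‖y‖) * ‖z‖ = ‖a‖ * ‖t‖ := by
    simpa using congrArg (‖·‖) hprod
  have hsum_norm : ‖x‖ * ‖y‖ ≤ ‖a‖ + (‖t‖ + ‖z‖) * ‖z‖ := by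
    rw [← norm_mul, hsum, ← norm_neg a]
    refine (norm_sub_le _ _).trans (add_le_add_right ?_ _)
    rw [norm_mul]
    gcongr
    exact norm_sub_le t z
  have hT : 0 < ‖t‖ := by nlinarith [norm_nonneg a, norm_nonneg t]
  have hlarge : 4 * ‖t‖ ^ 2 / 9 < ‖x‖ * ‖y‖ := by nlinarith [norm_nonneg x, norm_nonneg y]
  have hz : ‖z‖ < ‖t‖ / 12 := by nlinarith [norm_nonneg z, norm_nonneg a]
  nlinarith [norm_nonneg z]

/-- Let `a, t` be complex numbers with `|t|^2 > 9|a| > 0`. Then the cubic equation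
`3x^3 - 3tx^2 - 3ax + at = 0` has exactly one root `x₀` with `|x₀| > |a|^(1/2)`;
all the other roots satisfy `|x| < |a|^(1/2)`. -/
theorem cubic_one_large_root (a t : ℂ)
    (h1 : 9 * ‖a‖ < ‖t‖ ^ 2) (h2 : 0 < ‖a‖) :
    ∃ x₀ : ℂ,
      (3 * x₀ ^ 3 - 3 * t * x₀ ^ 2 - 3 * a * x₀ + a * t = 0 ∧
        Real.sqrt (‖a‖) < ‖x₀‖) ∧
      ∀ x : ℂ, 3 * x ^ 3 - 3 * t * x ^ 2 - 3 * a * x + a * t = 0 → x ≠ x₀ →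
        ‖x‖ < Real.sqrt (‖a‖) := by
  obtain ⟨x₀, hx₀, hlarge⟩ := exists_root_sqrt_norm_lt_norm h2 h1
  refine ⟨x₀, ⟨hx₀, hlarge⟩, fun x hx hne => ?_⟩
  by_contra! hge
  exact hne <| eq_of_roots_of_two_thirds_norm_lt h1 hx hx₀
    (two_thirds_norm_lt_norm_of_root h2 h1 hx hge)
    (two_thirds_norm_lt_norm_of_root h2 h1 hx₀ hlarge.le)
end

section
/- Let x ∈ ℚ((t⁻¹)) be a solution of a cubic equation b₃x³ + b₂x² + b₁x + b₀ = 0 with b₀,b₁,b₂,b₃ ∈ ℚ[t] and b₃ ≠ 0. Then x solves the Riccati differential equation D x' = A + B x + C x², where D = 4b₃b₁³ + 4b₂³b₀ + 27b₃²b₀² − b₂²b₁² − 18b₃b₂b₁b₀ (the negative of the discriminant), and A, B, C ∈ ℚ[t] are given by explicit determinantal formulas in the bᵢ and their derivatives. -/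
open Polynomial

/-- Let `x` (in a differential field extending `ℚ(t)`, e.g. `ℚ((t⁻¹))`) be a solution of a
cubic equation `b₃x³ + b₂x² + b₁x + b₀ = 0` with `b₀, b₁, b₂, b₃ ∈ ℚ[t]`, `b₃ ≠ 0`.
Then `x` solves the Riccati differential equation `D x' = A + B x + C x²` where
`D = 4b₃b₁³ + 4b₂³b₀ + 27b₃²b₀² − b₂²b₁² − 18b₃b₂b₁b₀` (the negative of the discriminant)
and `A, B, C` are given by explicit determinantal formulas (here stated multiplied through
by `b₃`, since `A = (1/b₃)·det(...)` and `B = (1/b₃)·det(...)`). -/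
theorem riccati_of_cubic {K : Type*} [Field K] [Algebra ℚ K]
    (d : Derivation ℚ K K) (T : K)
    (hd : ∀ p : Polynomial ℚ, d (aeval T p) = aeval T (derivative p))
    (b₀ b₁ b₂ b₃ : Polynomial ℚ) (hb₃ : b₃ ≠ 0) (x : K)
    (hx : aeval T b₃ * x ^ 3 + aeval T b₂ * x ^ 2 + aeval T b₁ * x + aeval T b₀ = 0) :
    aeval T b₃ *
        (aeval T (4 * b₃ * b₁ ^ 3 + 4 * b₂ ^ 3 * b₀ + 27 * b₃ ^ 2 * b₀ ^ 2
            - b₂ ^ 2 * b₁ ^ 2 - 18 * b₃ * b₂ * b₁ * b₀) * d x) =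
      aeval T (Matrix.det
          !![b₀ * derivative b₃ - b₃ * derivative b₀, -3 * b₀, b₂ * b₀;
             b₁ * derivative b₃ - b₃ * derivative b₁, -2 * b₁, b₂ * b₁ - 3 * b₃ * b₀;
             b₂ * derivative b₃ - b₃ * derivative b₂, -b₂, b₂ ^ 2 - 2 * b₃ * b₁]) +
      aeval T (Matrix.det
          !![b₁, b₀ * derivative b₃ - b₃ * derivative b₀, b₂ * b₀;
             2 * b₂, b₁ * derivative b₃ - b₃ * derivative b₁, b₂ * b₁ - 3 * b₃ * b₀;
             3 * b₃, b₂ * derivative b₃ - b₃ * derivative b₂, b₂ ^ 2 - 2 * b₃ * b₁]) * x +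
      aeval T b₃ * aeval T (Matrix.det
          !![b₁, -3 * b₀, b₀ * derivative b₃ - b₃ * derivative b₀;
             2 * b₂, -2 * b₁, b₁ * derivative b₃ - b₃ * derivative b₁;
             3 * b₃, -b₂, b₂ * derivative b₃ - b₃ * derivative b₂]) * x ^ 2 := by
  have hE : aeval T (derivative b₃) * x ^ 3 + 3 * aeval T b₃ * x ^ 2 * d x
      + aeval T (derivative b₂) * x ^ 2 + 2 * aeval T b₂ * x * d x
      + aeval T (derivative b₁) * x + aeval T b₁ * d x + aeval T (derivative b₀) = 0 := by
    have h := congrArg d hx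
    simp only [map_add, Derivation.leibniz, Derivation.leibniz_pow, map_zero, hd,
      smul_eq_mul, nsmul_eq_mul, Nat.cast_ofNat] at h
    linear_combination h
  simp only [Matrix.det_fin_three, Matrix.of_apply, Matrix.cons_val', Matrix.cons_val_zero,
    Matrix.cons_val_one, Matrix.head_cons, Matrix.head_fin_const, Matrix.empty_val',
    Matrix.cons_val_fin_one, Matrix.cons_val_two, Matrix.tail_cons, map_add, map_sub, map_mul, map_pow, map_neg,
    map_ofNat] at *
  linear_combination ((2 : K)*(aeval T b₂)^2*(aeval T b₃)*(aeval T (derivative b₃))*x^2 + (2 : K)*(aeval T b₂)^2*(aeval T b₃)*(aeval T (derivative b₂))*x + (2 : K)*(aeval T b₂)^2*(aeval T b₃)*(aeval T (derivative b₁)) + (6 : K)*(aeval T b₂)^2*(aeval T b₃)^2*x*(d x) + (4 : K)*(aeval T b₂)^3*(aeval T b₃)*(d x) + (-6 : K)*(aeval T b₁)*(aeval T b₃)^2*(aeval T (derivative b₃))*x^2 + (-6 : K)*(aeval T b₁)*(aeval T b₃)^2*(aeval T (derivative b₂))*x + (-6 : K)*(aeval T b₁)*(aeval T b₃)^2*(aeval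 T (derivative b₁)) + (-18 : K)*(aeval T b₁)*(aeval T b₃)^3*x*(d x) + (-1 : K)*(aeval T b₁)*(aeval T b₂)*(aeval T b₃)*(aeval T (derivative b₃))*x + (-1 : K)*(aeval T b₁)*(aeval T b₂)*(aeval T b₃)*(aeval T (derivative b₂)) + (-15 : K)*(aeval T b₁)*(aeval T b₂)*(aeval T b₃)^2*(d x) + (2 : K)*(aeval T b₁)^2*(aeval T b₃)*(aeval T (derivative b₃)) + (9 : K)*(aeval T b₀)*(aeval T b₃)^2*(aeval T (derivative b₃))*x + (9 : K)*(aeval T b₀)*(aeval T b₃)^2*(aeval T (derivative b₂)) + (27 : K)*(aeval T b₀)*(aeval T b₃)^3*(d x) + (-6 : K)*(aeval T b₀)*(aeval T b₂)*(aeval T b₃)*(aeval T (derivative b₃))) * hx + ((-2 : K)*(aeval T b₂)^2*(aeval T b₃)^2*x^2 + (-2 : K)*(aeval T b₂)^3*(aeval T b₃)*x + (6 : K)*(aeval T b₁)*(aeval T b₃)^3*x^2 + (7 : K)*(aeval T b₁)*(aeval T b₂)*(aeval T b₃)^2*x + (-1 : K)*(aeval T b₁)*(aeval T b₂)^2*(aeval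 T b₃) + (4 : K)*(aeval T b₁)^2*(aeval T b₃)^2 + (-9 : K)*(aeval T b₀)*(aeval T b₃)^3*x + (-3 : K)*(aeval T b₀)*(aeval T b₂)*(aeval T b₃)^2) * hE
end

section
/- Let x be a solution of the Riccati equation D x' = A + B x + C x² over a differential field, let a be an element with derivative a' and β ≠ 0 a constant, and set y = 1/(βx − a). Then y satisfies the Riccati equation D̃ y' = Ã + B̃ y + C̃ y² where à = −C, B̃ = −βB − 2aC, C̃ = −β²A − βaB − a²C + βa'D, and D̃ = βD. -/
theorem Derivation.map_const_mul_sub {R A : Type*} [CommSemiring R] [CommRing A] [Algebra R A]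
    (d : Derivation R A A) {β : A} (hβ : d β = 0) (x a : A) :
    d (β * x - a) = β * d x - d a := by
  rw [map_sub, Derivation.leibniz, hβ, smul_zero, add_zero, smul_eq_mul]

theorem Derivation.map_inv_const_mul_sub {R K : Type*} [CommRing R] [Field K] [Algebra R K]
    (d : Derivation R K K) {β : K} (hβ : d β = 0) (x a : K) :
    d (β * x - a)⁻¹ = -(β * x - a)⁻¹ ^ 2 * (β * d x - d a) := by
  rw [Derivation.leibniz_inv, d.map_const_mul_sub hβ, smul_eq_mul]

theorem riccati_transform_general {K : Type*} [Field K] [Algebra ℚ K]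
    (d : Derivation ℚ K K) (A B C D a β x y : K)
    (hβconst : d β = 0)
    (hden : β * x - a ≠ 0) (hy : y = (β * x - a)⁻¹)
    (hx : D * d x = A + B * x + C * x ^ 2) :
    (β * D) * d y =
      (-C) + (-(β * B) - 2 * a * C) * y +
        (-(β ^ 2 * A) - β * a * B - a ^ 2 * C + β * d a * D) * y ^ 2 := by
  have hdy : d y = -y ^ 2 * (β * d x - d a) := hy ▸ d.map_inv_const_mul_sub hβconst x a
  have hyx : y * (β * x - a) = 1 := hy ▸ inv_mul_cancel₀ hden
  -- `hyx` eliminates `x` through `(βx)y = ay + 1`, hence `(βx)²y² = (ay + 1)²`.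
  rw [hdy]
  linear_combination (-(β ^ 2) * y ^ 2) * hx - (β * B * y + C * (β * x * y + a * y + 1)) * hyx

/-- Let `x` be a solution of the Riccati equation `D x' = A + B x + C x²` over a
differential field, let `a` be an element with derivative `a' = d a` and `β ≠ 0`
a constant (i.e. `d β = 0`), and set `y = 1/(βx − a)`. Then `y` satisfies the Riccati
equation `D̃ y' = Ã + B̃ y + C̃ y²` where `Ã = −C`, `B̃ = −βB − 2aC`,
`C̃ = −β²A − βaB − a²C + βa'D`, and `D̃ = βD`. -/
theorem riccati_transform {K : Type*} [Field K] [Algebra ℚ K]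
    (d : Derivation ℚ K K) (A B C D a β x y : K)
    (hβ : β ≠ 0) (hβconst : d β = 0)
    (hden : β * x - a ≠ 0) (hy : y = (β * x - a)⁻¹)
    (hx : D * d x = A + B * x + C * x ^ 2) :
    (β * D) * d y =
      (-C) + (-(β * B) - 2 * a * C) * y +
        (-(β ^ 2 * A) - β * a * B - a ^ 2 * C + β * d a * D) * y ^ 2 :=
  riccati_transform_general d A B C D a β x y hβconst hden hy hx
end

section
/- Let x₁, x₂, x₃ ∈ ℂ[[t^{-1/6}]] be three distinct solutions of a cubic equation b₀ + b₁x + b₂x² + b₃x³ = 0 with polynomial coefficients, with deg x₁ ≥ 1 and deg x₂, deg x₃ ≤ 0 (degree meaning the order of the pole at infinity). Then x₁ is the only solution of the associated Riccati differential equation D x' = A + B x + C x² having degree ≥ 1. -/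
/-!
Vieta's formulas write `b₀, b₁, b₂` as `b₃` times the elementary symmetric functions of
`x₁, x₂, x₃`; after this substitution the Riccati equation of each root becomes a polynomial
identity, so the three roots solve it. Its leading coefficient is `-b₃⁵ ∏ (xᵢ - xⱼ)² ≠ 0`, and the
cross-ratio `K` of four solutions of a Riccati equation has zero derivative, so it is a constant.
Solving `K = (x₁, x₂; x₃, x)` for `x` gives
`x = (x₁ (x₂ - K (x₂ - x₃)) - x₂ x₃) / (x₁ - x₃ - K (x₂ - x₃))`, in which the pole of `x₁`
dominates numerator and denominator alike; hence `deg x ≤ 0` unless `x = x₁`.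
-/

open Polynomial

/-- The formal derivative (with respect to `X`) of a formal Laurent series. -/
noncomputable def lsDeriv {F : Type*} [Field F] (f : LaurentSeries F) : LaurentSeries F where
  coeff n := (n + 1 : ℤ) * f.coeff (n + 1)
  isPWO_support' := by
    refine ((HahnSeries.single (-1 : ℤ) (1 : F) * f).isPWO_support).mono ?_
    intro n hn
    have hf : f.coeff (n + 1) ≠ 0 := by
      intro h
      apply hn
      simp [h]
    have hcoeff : (HahnSeries.single (-1 : ℤ) (1 : F) * f).coeff n = f.coeff (n + 1) := by
      have := HahnSeries.coeff_single_mul_add (r := (1 : F)) (x := f) (b := (-1 : ℤ)) (a := n + 1)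
      simpa using this
    simp only [HahnSeries.mem_support, hcoeff]
    exact hf

/-- We model `ℂ[[t^{-1/6}]]` (and its fraction field) by the field of formal Laurent series
`ℂ((X))` in the variable `X = t^{-1/6}`.  In this model `t = X⁻⁶`. -/
noncomputable def pT : LaurentSeries ℂ := HahnSeries.single (-6 : ℤ) 1

/-- The formal derivative with respect to `t` on `ℂ((t^{-1/6}))`: since `X = t^{-1/6}`,
`dX/dt = -(1/6)·t^{-7/6} = -(1/6)·X⁷`, so `d/dt = -(1/6)·X⁷·d/dX`. -/
noncomputable def tDeriv6 (f : LaurentSeries ℂ) : LaurentSeries ℂ :=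
  HahnSeries.single (7 : ℤ) (-(6 : ℂ)⁻¹) * lsDeriv f

/-- `z` solves the Riccati equation `D z' = A + B z + C z²` associated (as in
Proposition 1) with the cubic `b₃x³ + b₂x² + b₁x + b₀ = 0`; since
`A = (1/b₃)·det(...)` and `B = (1/b₃)·det(...)`, the equation is stated multiplied
through by `b₃`. -/
noncomputable def SolvesRiccati (b₀ b₁ b₂ b₃ : Polynomial ℂ) (z : LaurentSeries ℂ) : Prop :=
  aeval pT b₃ *
      (aeval pT (4 * b₃ * b₁ ^ 3 + 4 * b₂ ^ 3 * b₀ + 27 * b₃ ^ 2 * b₀ ^ 2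
          - b₂ ^ 2 * b₁ ^ 2 - 18 * b₃ * b₂ * b₁ * b₀) * tDeriv6 z) =
    aeval pT (Matrix.det
        !![b₀ * derivative b₃ - b₃ * derivative b₀, -3 * b₀, b₂ * b₀;
           b₁ * derivative b₃ - b₃ * derivative b₁, -2 * b₁, b₂ * b₁ - 3 * b₃ * b₀;
           b₂ * derivative b₃ - b₃ * derivative b₂, -b₂, b₂ ^ 2 - 2 * b₃ * b₁]) +
    aeval pT (Matrix.det
        !![b₁, b₀ * derivative b₃ - b₃ * derivative b₀, b₂ * b₀;
           2 * b₂, b₁ * derivative b₃ - b₃ * derivative b₁, b₂ * b₁ - 3 * b₃ * b₀;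
           3 * b₃, b₂ * derivative b₃ - b₃ * derivative b₂, b₂ ^ 2 - 2 * b₃ * b₁]) * z +
    aeval pT b₃ * aeval pT (Matrix.det
        !![b₁, -3 * b₀, b₀ * derivative b₃ - b₃ * derivative b₀;
           2 * b₂, -2 * b₁, b₁ * derivative b₃ - b₃ * derivative b₁;
           3 * b₃, -b₂, b₂ * derivative b₃ - b₃ * derivative b₂]) * z ^ 2

namespace LaurentSeries

variable {F : Type*} [Field F]

-- The Leibniz rule for `lsDeriv = X⁻¹ · X d/dX` is reduced to that of the Euler operator
-- `X d/dX`, which is the termwise identity `n = i + j` in the Cauchy product.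
noncomputable def eulerDeriv (f : LaurentSeries F) : LaurentSeries F where
  coeff n := n * f.coeff n
  isPWO_support' := f.isPWO_support.mono fun n hn h => hn (by simp [h])

theorem support_eulerDeriv_subset (f : LaurentSeries F) : (eulerDeriv f).support ⊆ f.support :=
  fun n hn h => hn (by simp [eulerDeriv, h])

theorem eulerDeriv_mul (f g : LaurentSeries F) :
    eulerDeriv (f * g) = eulerDeriv f * g + f * eulerDeriv g := by
  ext n
  rw [HahnSeries.coeff_add,
    HahnSeries.coeff_mul_left' f.isPWO_support (support_eulerDeriv_subset f),
    HahnSeries.coeff_mul_right' g.isPWO_support (support_eulerDeriv_subset g),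
    ← Finset.sum_add_distrib]
  simp only [eulerDeriv, HahnSeries.coeff_mul, Finset.mul_sum]
  refine Finset.sum_congr rfl fun ij hij => ?_
  rw [← (Finset.mem_antidiagonal.mp hij).2.2]
  push_cast
  ring

theorem lsDeriv_eq_single_mul_eulerDeriv (f : LaurentSeries F) :
    lsDeriv f = HahnSeries.single (-1) 1 * eulerDeriv f := by
  ext n
  simpa [lsDeriv, eulerDeriv] using
    (HahnSeries.coeff_single_mul_add (r := (1 : F)) (x := eulerDeriv f) (b := -1) (a := n + 1)).symm

noncomputable def derivation : Derivation F (LaurentSeries F) (LaurentSeries F) where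
  toFun := lsDeriv
  map_add' f g := by ext n; simp [lsDeriv, mul_add]
  map_smul' c f := by
    ext n
    rw [RingHom.id_apply, Algebra.smul_def, LaurentSeries.algebraMap_apply,
      HahnSeries.C_mul_eq_smul]
    simp [lsDeriv]
    ring
  map_one_eq_zero' := by
    ext n
    simp only [LinearMap.coe_mk, AddHom.coe_mk, lsDeriv, HahnSeries.coeff_one,
      HahnSeries.coeff_zero]
    split_ifs with h <;> simp [h]
  leibniz' f g := by
    simp only [LinearMap.coe_mk, AddHom.coe_mk, lsDeriv_eq_single_mul_eulerDeriv, eulerDeriv_mul,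
      smul_eq_mul]
    ring

theorem derivation_apply (f : LaurentSeries F) : derivation f = lsDeriv f := rfl

theorem eq_C_of_derivation_eq_zero [CharZero F] {f : LaurentSeries F} (hf : derivation f = 0) :
    f = HahnSeries.C (f.coeff 0) := by
  ext n
  rw [HahnSeries.C_apply, HahnSeries.coeff_single]
  split_ifs with hn
  · rw [hn]
  · simpa [derivation_apply, lsDeriv, hn] using congrArg (HahnSeries.coeff · (n - 1)) hf

end LaurentSeries

noncomputable def tDerivation : Derivation ℂ (LaurentSeries ℂ) (LaurentSeries ℂ) where
  toFun := tDeriv6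
  map_add' f g := by
    simp only [tDeriv6, ← LaurentSeries.derivation_apply, map_add, mul_add]
  map_smul' c f := by
    simp only [tDeriv6, ← LaurentSeries.derivation_apply, RingHom.id_apply]
    rw [Derivation.map_smul, ← HahnSeries.C_mul_eq_smul, ← HahnSeries.C_mul_eq_smul]
    ring
  map_one_eq_zero' := by
    show tDeriv6 1 = 0
    rw [tDeriv6, ← LaurentSeries.derivation_apply, Derivation.map_one_eq_zero, mul_zero]
  leibniz' f g := by
    show tDeriv6 (f * g) = f • tDeriv6 g + g • tDeriv6 f
    simp only [tDeriv6, ← LaurentSeries.derivation_apply, Derivation.leibniz, smul_eq_mul]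
    ring

theorem tDerivation_apply (f : LaurentSeries ℂ) : tDerivation f = tDeriv6 f := rfl

theorem tDerivation_pT : tDerivation pT = 1 := by
  have h : lsDeriv pT = HahnSeries.single (-7) (-6 : ℂ) := by
    ext n
    by_cases hn : n = -7
    · subst hn
      norm_num [lsDeriv, pT]
    · have : n + 1 ≠ -6 := by omega
      simp [lsDeriv, pT, hn, this]
  rw [tDerivation_apply, tDeriv6, h, HahnSeries.single_mul_single]
  norm_num

theorem tDerivation_aeval (p : ℂ[X]) : tDerivation (aeval pT p) = aeval pT (derivative p) := by
  rw [Derivation.map_aeval, tDerivation_pT, smul_eq_mul, mul_one]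

theorem eq_C_of_tDerivation_eq_zero {f : LaurentSeries ℂ} (hf : tDerivation f = 0) :
    f = HahnSeries.C (f.coeff 0) := by
  refine LaurentSeries.eq_C_of_derivation_eq_zero ((mul_eq_zero.mp hf).resolve_left ?_)
  simp

theorem aeval_pT_monomial (n : ℕ) (a : ℂ) :
    aeval pT (monomial n a) = HahnSeries.single (-(6 * n : ℤ)) a := by
  rw [aeval_monomial, LaurentSeries.algebraMap_apply, HahnSeries.C_apply, pT,
    HahnSeries.single_pow, HahnSeries.single_mul_single, one_pow, mul_one, zero_add, nsmul_eq_mul]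
  ring_nf

theorem coeff_aeval_pT (p : ℂ[X]) (n : ℕ) : (aeval pT p).coeff (-(6 * n : ℤ)) = p.coeff n := by
  induction p using Polynomial.induction_on' with
  | add p q hp hq => rw [map_add, HahnSeries.coeff_add, hp, hq, coeff_add]
  | monomial m a =>
    rw [aeval_pT_monomial, coeff_monomial, HahnSeries.coeff_single]
    simp [eq_comm]

theorem aeval_pT_injective : Function.Injective (aeval pT : ℂ[X] → LaurentSeries ℂ) :=
  (injective_iff_map_eq_zero _).mpr fun p hp => Polynomial.ext fun n => by
    simpa [hp] using (coeff_aeval_pT p n).symm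

theorem cubic_coeffs_eq_of_three_roots {R : Type*} [CommRing R] [IsDomain R]
    {b₀ b₁ b₂ b₃ x₁ x₂ x₃ : R}
    (hroot : ∀ x ∈ ({x₁, x₂, x₃} : Set R), b₀ + b₁ * x + b₂ * x ^ 2 + b₃ * x ^ 3 = 0)
    (h12 : x₁ ≠ x₂) (h13 : x₁ ≠ x₃) (h23 : x₂ ≠ x₃) :
    b₀ = -(b₃ * (x₁ * x₂ * x₃)) ∧ b₁ = b₃ * (x₁ * x₂ + x₁ * x₃ + x₂ * x₃) ∧
      b₂ = -(b₃ * (x₁ + x₂ + x₃)) := by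
  have e₁ := hroot x₁ (by simp)
  have e₂ := hroot x₂ (by simp)
  have e₃ := hroot x₃ (by simp)
  have d₁₂ : b₁ + b₂ * (x₁ + x₂) + b₃ * (x₁ ^ 2 + x₁ * x₂ + x₂ ^ 2) = 0 :=
    (mul_eq_zero.mp (by linear_combination e₁ - e₂ : (x₁ - x₂) * _ = 0)).resolve_left
      (sub_ne_zero.mpr h12)
  have d₁₃ : b₁ + b₂ * (x₁ + x₃) + b₃ * (x₁ ^ 2 + x₁ * x₃ + x₃ ^ 2) = 0 :=
    (mul_eq_zero.mp (by linear_combination e₁ - e₃ : (x₁ - x₃) * _ = 0)).resolve_left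
      (sub_ne_zero.mpr h13)
  have d₁₂₃ : b₂ + b₃ * (x₁ + x₂ + x₃) = 0 :=
    (mul_eq_zero.mp (by linear_combination d₁₂ - d₁₃ : (x₂ - x₃) * _ = 0)).resolve_left
      (sub_ne_zero.mpr h23)
  refine ⟨?_, ?_, ?_⟩
  · linear_combination e₁ - x₁ * d₁₂ + x₁ * x₂ * d₁₂₃
  · linear_combination d₁₂ - (x₁ + x₂) * d₁₂₃
  · linear_combination d₁₂₃

-- No relation between `b₃, x₁, x₂, x₃` and their derivatives is needed: with these coefficients
-- the Riccati equation of `x₁` is an identity of differential polynomials.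
theorem solvesRiccati_of_cubic_coeffs_eq {b₀ b₁ b₂ b₃ : ℂ[X]} {x₁ x₂ x₃ : LaurentSeries ℂ}
    (h₀ : aeval pT b₀ = -(aeval pT b₃ * (x₁ * x₂ * x₃)))
    (h₁ : aeval pT b₁ = aeval pT b₃ * (x₁ * x₂ + x₁ * x₃ + x₂ * x₃))
    (h₂ : aeval pT b₂ = -(aeval pT b₃ * (x₁ + x₂ + x₃))) :
    SolvesRiccati b₀ b₁ b₂ b₃ x₁ := by
  simp only [SolvesRiccati, Matrix.det_fin_three, Matrix.of_apply, Matrix.cons_val',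
    Matrix.cons_val_zero, Matrix.cons_val_one, Matrix.cons_val_two, Matrix.head_cons,
    Matrix.tail_cons, Matrix.empty_val', Matrix.cons_val_fin_one, Matrix.head_fin_const,
    map_add, map_sub, map_mul, map_pow, map_neg, map_ofNat, ← tDerivation_aeval,
    ← tDerivation_apply]
  rw [h₀, h₁, h₂]
  simp only [map_neg, map_add, Derivation.leibniz, smul_eq_mul]
  ring

def crossRatio {K : Type*} [Field K] (z₁ z₂ z₃ z₄ : K) : K :=
  (z₁ - z₃) * (z₂ - z₄) / ((z₂ - z₃) * (z₁ - z₄))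

theorem Derivation.map_crossRatio_eq_zero {k K M : Type*} [CommRing k] [Field K] [Algebra k K]
    [AddCommGroup M] [Module K M] [Module k M] (D : Derivation k K M) {Δ : K} {a b c : M}
    {z₁ z₂ z₃ z₄ : K} (hΔ : Δ ≠ 0)
    (h₁ : Δ • D z₁ = a + z₁ • b + z₁ ^ 2 • c) (h₂ : Δ • D z₂ = a + z₂ • b + z₂ ^ 2 • c)
    (h₃ : Δ • D z₃ = a + z₃ • b + z₃ ^ 2 • c) (h₄ : Δ • D z₄ = a + z₄ • b + z₄ ^ 2 • c) :
    D (crossRatio z₁ z₂ z₃ z₄) = 0 := by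
  -- `Δ (zᵢ - zⱼ)' = (zᵢ - zⱼ) (b + c (zᵢ + zⱼ))`, so numerator and denominator have the same
  -- logarithmic derivative `(2 b + c (z₁ + z₂ + z₃ + z₄)) / Δ`.
  suffices h : Δ • ((z₂ - z₃) * (z₁ - z₄)) • D ((z₁ - z₃) * (z₂ - z₄)) =
      Δ • ((z₁ - z₃) * (z₂ - z₄)) • D ((z₂ - z₃) * (z₁ - z₄)) by
    rw [crossRatio, Derivation.leibniz_div, smul_right_injective M hΔ h, sub_self, smul_zero]
  simp only [Derivation.leibniz, map_sub, smul_add, smul_sub, smul_smul]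
  linear_combination (norm := module) ((z₂ - z₃) * (z₁ - z₄) * (z₁ - z₃)) • (h₂ - h₄) +
    ((z₂ - z₃) * (z₁ - z₄) * (z₂ - z₄)) • (h₁ - h₃) -
    ((z₁ - z₃) * (z₂ - z₄) * (z₂ - z₃)) • (h₁ - h₄) -
    ((z₁ - z₃) * (z₂ - z₄) * (z₁ - z₄)) • (h₂ - h₃)

namespace HahnSeries

variable (Γ R : Type*) [AddCommGroup Γ] [LinearOrder Γ] [IsOrderedAddMonoid Γ]

-- For `Γ = ℤ` and `X = t^{-1/6}`: the series of degree `≤ 0` in `t`.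
def nonnegSubring [CommRing R] : Subring (HahnSeries Γ R) where
  carrier := {x | 0 ≤ x.orderTop}
  mul_mem' hx hy := by
    rw [Set.mem_ofPred_eq] at *
    exact (add_nonneg hx hy).trans orderTop_add_le_mul
  one_mem' := by
    rw [Set.mem_ofPred_eq, ← C_one, C_apply]
    exact orderTop_single_le
  add_mem' hx hy := by
    rw [Set.mem_ofPred_eq] at *
    exact (le_min hx hy).trans min_orderTop_le_orderTop_add
  zero_mem' := by simp
  neg_mem' hx := by rwa [Set.mem_ofPred_eq, orderTop_neg]

variable {Γ R}

theorem mem_nonnegSubring [CommRing R] {x : HahnSeries Γ R} :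
    x ∈ nonnegSubring Γ R ↔ 0 ≤ x.order := by
  rw [nonnegSubring, Subring.mem_mk, ← zero_le_orderTop_iff]
  rfl

theorem C_mem_nonnegSubring [CommRing R] (r : R) : C r ∈ nonnegSubring Γ R := by
  rw [mem_nonnegSubring, ← zero_le_orderTop_iff, C_apply]
  exact orderTop_single_le

theorem mem_nonnegSubring_of_mul_sub_eq [CommRing R] [NoZeroDivisors R] {x y a b c : HahnSeries Γ R}
    (hy : y.order < 0) (ha : a ∈ nonnegSubring Γ R) (hb : b ∈ nonnegSubring Γ R)
    (hc : c ∈ nonnegSubring Γ R) (h : x * (y - a) = y * b + c) : x ∈ nonnegSubring Γ R := by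
  simp only [mem_nonnegSubring, ← zero_le_orderTop_iff] at *
  replace hy : y.orderTop < 0 := not_le.mp fun h => hy.not_ge (zero_le_orderTop_iff.mp h)
  have hden : (y - a).orderTop = y.orderTop := by
    rw [sub_eq_add_neg]
    exact orderTop_add_eq_left (by rw [orderTop_neg]; exact hy.trans_le ha)
  have hnum : y.orderTop ≤ (y * b + c).orderTop := by
    refine le_trans (le_min ?_ (hy.le.trans hc)) min_orderTop_le_orderTop_add
    rw [orderTop_mul]
    exact le_add_of_nonneg_right hb
  rw [← h, orderTop_mul, hden] at hnum
  exact WithTop.le_of_add_le_add_right hy.ne_top (by rwa [zero_add])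

theorem mem_nonnegSubring_of_crossRatio_mem [Field R] {x y u w : HahnSeries Γ R}
    (hK : crossRatio y u w x ∈ nonnegSubring Γ R) (hy : y.order < 0)
    (hu : u ∈ nonnegSubring Γ R) (hw : w ∈ nonnegSubring Γ R) (huw : u ≠ w) (hxy : x ≠ y) :
    x ∈ nonnegSubring Γ R := by
  set K := crossRatio y u w x
  have hKM : K * ((u - w) * (y - x)) = (y - w) * (u - x) :=
    div_mul_cancel₀ _ (mul_ne_zero (sub_ne_zero.mpr huw) (sub_ne_zero.mpr hxy.symm))
  exact mem_nonnegSubring_of_mul_sub_eq hy (add_mem hw (mul_mem hK (sub_mem hu hw)))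
    (sub_mem hu (mul_mem hK (sub_mem hu hw))) (neg_mem (mul_mem hu hw))
    (by linear_combination hKM)

end HahnSeries

theorem solvesRiccati_of_three_roots {b₀ b₁ b₂ b₃ : ℂ[X]} {x₁ x₂ x₃ : LaurentSeries ℂ}
    (hroot : ∀ z ∈ ({x₁, x₂, x₃} : Set (LaurentSeries ℂ)),
      aeval pT b₀ + aeval pT b₁ * z + aeval pT b₂ * z ^ 2 + aeval pT b₃ * z ^ 3 = 0)
    (h12 : x₁ ≠ x₂) (h13 : x₁ ≠ x₃) (h23 : x₂ ≠ x₃) :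
    ∀ z ∈ ({x₁, x₂, x₃} : Set (LaurentSeries ℂ)), SolvesRiccati b₀ b₁ b₂ b₃ z := by
  obtain ⟨hb₀, hb₁, hb₂⟩ := cubic_coeffs_eq_of_three_roots hroot h12 h13 h23
  rintro z (rfl | rfl | rfl)
  · exact solvesRiccati_of_cubic_coeffs_eq hb₀ hb₁ hb₂
  · exact solvesRiccati_of_cubic_coeffs_eq (x₂ := x₁) (x₃ := x₃)
      (by rw [hb₀]; ring) (by rw [hb₁]; ring) (by rw [hb₂]; ring)
  · exact solvesRiccati_of_cubic_coeffs_eq (x₂ := x₁) (x₃ := x₂)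
      (by rw [hb₀]; ring) (by rw [hb₁]; ring) (by rw [hb₂]; ring)

theorem SolvesRiccati.tDerivation_crossRatio_eq_zero {b₀ b₁ b₂ b₃ : ℂ[X]}
    {z₁ z₂ z₃ z₄ : LaurentSeries ℂ}
    (hΔ : aeval pT (b₃ * (4 * b₃ * b₁ ^ 3 + 4 * b₂ ^ 3 * b₀ + 27 * b₃ ^ 2 * b₀ ^ 2
      - b₂ ^ 2 * b₁ ^ 2 - 18 * b₃ * b₂ * b₁ * b₀)) ≠ 0)
    (h₁ : SolvesRiccati b₀ b₁ b₂ b₃ z₁) (h₂ : SolvesRiccati b₀ b₁ b₂ b₃ z₂)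
    (h₃ : SolvesRiccati b₀ b₁ b₂ b₃ z₃) (h₄ : SolvesRiccati b₀ b₁ b₂ b₃ z₄) :
    tDerivation (crossRatio z₁ z₂ z₃ z₄) = 0 := by
  rw [map_mul] at hΔ
  rw [SolvesRiccati, ← mul_assoc, ← tDerivation_apply, mul_comm _ z₁, mul_comm _ (z₁ ^ 2)] at h₁
  rw [SolvesRiccati, ← mul_assoc, ← tDerivation_apply, mul_comm _ z₂, mul_comm _ (z₂ ^ 2)] at h₂
  rw [SolvesRiccati, ← mul_assoc, ← tDerivation_apply, mul_comm _ z₃, mul_comm _ (z₃ ^ 2)] at h₃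
  rw [SolvesRiccati, ← mul_assoc, ← tDerivation_apply, mul_comm _ z₄, mul_comm _ (z₄ ^ 2)] at h₄
  exact tDerivation.map_crossRatio_eq_zero hΔ h₁ h₂ h₃ h₄

theorem tDerivation_crossRatio_eq_zero_of_three_roots {b₀ b₁ b₂ b₃ : ℂ[X]} (hb₃ : b₃ ≠ 0)
    {x₁ x₂ x₃ x : LaurentSeries ℂ}
    (hroot : ∀ z ∈ ({x₁, x₂, x₃} : Set (LaurentSeries ℂ)),
      aeval pT b₀ + aeval pT b₁ * z + aeval pT b₂ * z ^ 2 + aeval pT b₃ * z ^ 3 = 0)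
    (h12 : x₁ ≠ x₂) (h13 : x₁ ≠ x₃) (h23 : x₂ ≠ x₃) (hx : SolvesRiccati b₀ b₁ b₂ b₃ x) :
    tDerivation (crossRatio x₁ x₂ x₃ x) = 0 := by
  have hsol := solvesRiccati_of_three_roots hroot h12 h13 h23
  refine SolvesRiccati.tDerivation_crossRatio_eq_zero ?_ (hsol x₁ (by simp)) (hsol x₂ (by simp))
    (hsol x₃ (by simp)) hx
  obtain ⟨hb₀, hb₁, hb₂⟩ := cubic_coeffs_eq_of_three_roots hroot h12 h13 h23
  simp only [map_mul, map_sub, map_add, map_pow, map_ofNat]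
  rw [hb₀, hb₁, hb₂]
  refine ne_of_eq_of_ne (b := -(aeval pT b₃ ^ 5 * ((x₁ - x₂) * (x₁ - x₃) * (x₂ - x₃)) ^ 2))
    (by ring) ?_
  simp [(map_ne_zero_iff _ aeval_pT_injective).mpr hb₃, sub_eq_zero, h12, h13, h23]

/-- Let `x₁, x₂, x₃ ∈ ℂ[[t^{-1/6}]]` (modelled as Laurent series in `X = t^{-1/6}`) be
three distinct solutions of a cubic `b₀ + b₁x + b₂x² + b₃x³ = 0` with polynomial
coefficients, with `deg x₁ ≥ 1` (i.e. order ≤ −6 in the `X`-grading) and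
`deg x₂, deg x₃ ≤ 0` (order ≥ 0).  Then `x₁` solves the associated Riccati equation and
is its only solution of degree ≥ 1. -/
theorem riccati_unique_solution_of_positive_degree
    (b₀ b₁ b₂ b₃ : Polynomial ℂ) (hb₃ : b₃ ≠ 0)
    (x₁ x₂ x₃ : LaurentSeries ℂ)
    (hroot : ∀ z ∈ ({x₁, x₂, x₃} : Set (LaurentSeries ℂ)),
      aeval pT b₀ + aeval pT b₁ * z + aeval pT b₂ * z ^ 2 + aeval pT b₃ * z ^ 3 = 0)
    (h12 : x₁ ≠ x₂) (h13 : x₁ ≠ x₃) (h23 : x₂ ≠ x₃)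
    (hdeg1 : x₁.order ≤ -6) (hdeg2 : 0 ≤ x₂.order) (hdeg3 : 0 ≤ x₃.order) :
    SolvesRiccati b₀ b₁ b₂ b₃ x₁ ∧
      ∀ x : LaurentSeries ℂ, SolvesRiccati b₀ b₁ b₂ b₃ x → x.order ≤ -6 → x = x₁ := by
  refine ⟨solvesRiccati_of_three_roots hroot h12 h13 h23 x₁ (by simp), fun x hx hdeg => ?_⟩
  by_contra hne
  have hK : crossRatio x₁ x₂ x₃ x ∈ HahnSeries.nonnegSubring ℤ ℂ := by
    rw [eq_C_of_tDerivation_eq_zero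
      (tDerivation_crossRatio_eq_zero_of_three_roots hb₃ hroot h12 h13 h23 hx)]
    exact HahnSeries.C_mem_nonnegSubring _
  have hxdeg : 0 ≤ x.order := HahnSeries.mem_nonnegSubring.mp <|
    HahnSeries.mem_nonnegSubring_of_crossRatio_mem hK
    (by omega) (HahnSeries.mem_nonnegSubring.mpr hdeg2) (HahnSeries.mem_nonnegSubring.mpr hdeg3)
    h23 hne
  omega
end

section
/- Let a be a positive integer and t ∈ ℝ, t ≥ 1. For the convergents p_n/q_n of the continued fraction expansion K with partial quotients (a₁,β₁) = (3t, 2a), (a₂,β₂) = (t, a), (a₃,β₃) = (9t(t²+2a), 4a²), (a₄,β₄) = (t, 5a²) and in general a_{4k+1} = 3(4k+1)t, β_{4k+1} = 2(3k+1)a; a_{4k+2} = t, β_{4k+2} = (6k+1)a; a_{4k+3} = 3(4k+3)t(t²+2a), β_{4k+3} = 2(3k+2)a²; a_{4k+4} = t, β_{4k+4} = (6k−1)a² (with a₀ = t), the denominators satisfy 9(4k+3)(4k+5)t²(t²+a)(t²+2a)·q_{4k+2} < q_{4k+6} < 9(4k+3)(4k+5)(t²+a)³·q_{4k+2} for all k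 ≥ 0. -/
/-- Let `a` be a positive integer and `t ∈ ℝ`, `t ≥ 1`.  For the denominators `qₙ` of the
convergents of the continued fraction №5 (with `a₀ = t`), given by the recursions
`qₙ = aₙ q_{n−1} + βₙ q_{n−2}` with partial quotients `a_{4k+1} = 3(4k+1)t`,
`β_{4k+1} = 2(3k+1)a`; `a_{4k+2} = t`, `β_{4k+2} = (6k+1)a`;
`a_{4k+3} = 3(4k+3)t(t²+2a)`, `β_{4k+3} = 2(3k+2)a²`; `a_{4k+4} = t`,
`β_{4k+4} = (6k+5)a²` (the index `k` being `⌊i/4⌋`, so that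
`(a₁,β₁) = (3t, 2a)`, `(a₂,β₂) = (t, a)`, `(a₃,β₃) = (9t(t²+2a), 4a²)`,
`(a₄,β₄) = (t, 5a²)`), one has
`9(4k+3)(4k+5)t²(t²+a)(t²+2a)·q_{4k+2} < q_{4k+6} < 9(4k+3)(4k+5)(t²+a)³·q_{4k+2}`
for all `k ≥ 0`. -/
theorem denominators_growth_no5 (a : ℤ) (ha : 0 < a) (t : ℝ) (ht : 1 ≤ t)
    (q : ℕ → ℝ) (h0 : q 0 = 1) (h1 : q 1 = 3 * t)
    (h2 : ∀ k : ℕ, q (4 * k + 2) = t * q (4 * k + 1) + (6 * (k : ℝ) + 1) * a * q (4 * k))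
    (h3 : ∀ k : ℕ, q (4 * k + 3) =
      3 * (4 * (k : ℝ) + 3) * t * (t ^ 2 + 2 * a) * q (4 * k + 2)
        + 2 * (3 * (k : ℝ) + 2) * (a : ℝ) ^ 2 * q (4 * k + 1))
    (h4 : ∀ k : ℕ, q (4 * k + 4) =
      t * q (4 * k + 3) + (6 * (k : ℝ) + 5) * (a : ℝ) ^ 2 * q (4 * k + 2))
    (h5 : ∀ k : ℕ, q (4 * k + 5) =
      3 * (4 * (k : ℝ) + 5) * t * q (4 * k + 4)
        + 2 * (3 * (k : ℝ) + 4) * a * q (4 * k + 3)) :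
    ∀ k : ℕ,
      9 * (4 * (k : ℝ) + 3) * (4 * (k : ℝ) + 5) * t ^ 2 * (t ^ 2 + a) * (t ^ 2 + 2 * a)
          * q (4 * k + 2) < q (4 * k + 6) ∧
      q (4 * k + 6) <
        9 * (4 * (k : ℝ) + 3) * (4 * (k : ℝ) + 5) * (t ^ 2 + a) ^ 3 * q (4 * k + 2) := by
  have ha1 : (1:ℝ) ≤ (a:ℝ) := by exact_mod_cast ha
  have ht0 : (0:ℝ) < t := lt_of_lt_of_le one_pos ht
  have ha0 : (0:ℝ) < (a:ℝ) := lt_of_lt_of_le one_pos ha1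
  have pos : ∀ k : ℕ, 0 < q (4*k) ∧ 0 < q (4*k+1) ∧ 0 < q (4*k+2) := by
    intro k
    induction k with
    | zero =>
      have hq0 : 0 < q 0 := by rw [h0]; norm_num
      have hq1 : 0 < q 1 := by rw [h1]; linarith
      refine ⟨hq0, hq1, ?_⟩
      have := h2 0
      norm_num at this
      rw [this]; nlinarith
    | succ n ih =>
      obtain ⟨hq0, hq1, hq2⟩ := ih
      have hn : (0:ℝ) ≤ (n:ℝ) := Nat.cast_nonneg n
      have ht2a : (0:ℝ) < t^2 + 2*(a:ℝ) := by nlinarith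
      have hq3 : 0 < q (4*n+3) := by
        rw [h3 n]
        have p1 : (0:ℝ) < 3*(4*(n:ℝ)+3)*t*(t^2+2*(a:ℝ))*q (4*n+2) :=
          mul_pos (mul_pos (mul_pos (by nlinarith) ht0) ht2a) hq2
        have p2 : (0:ℝ) < 2*(3*(n:ℝ)+2)*(a:ℝ)^2*q (4*n+1) :=
          mul_pos (mul_pos (by nlinarith) (by positivity)) hq1
        linarith
      have hq4 : 0 < q (4*n+4) := by
        rw [h4 n]
        have p1 : 0 < t * q (4*n+3) := mul_pos ht0 hq3
        have p2 : (0:ℝ) < (6*(n:ℝ)+5)*(a:ℝ)^2*q (4*n+2) :=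
          mul_pos (mul_pos (by nlinarith) (by positivity)) hq2
        linarith
      have hq5 : 0 < q (4*n+5) := by
        rw [h5 n]
        have p1 : (0:ℝ) < 3*(4*(n:ℝ)+5)*t*q (4*n+4) :=
          mul_pos (mul_pos (by nlinarith) ht0) hq4
        have p2 : (0:ℝ) < 2*(3*(n:ℝ)+4)*(a:ℝ)*q (4*n+3) :=
          mul_pos (mul_pos (by nlinarith) ha0) hq3
        linarith
      have i0 : 4*(n+1) = 4*n+4 := by ring
      have i1 : 4*(n+1)+1 = 4*n+5 := by omega
      have i2 : 4*(n+1)+2 = 4*n+6 := by omega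
      refine ⟨by rw [i0]; exact hq4, by rw [i1]; exact hq5, ?_⟩
      rw [i2]
      have H2 := h2 (n+1)
      rw [i2, i1, i0] at H2
      push_cast at H2
      rw [H2]
      have p1 : 0 < t * q (4*n+5) := mul_pos ht0 hq5
      have p2 : (0:ℝ) < (6*((n:ℝ)+1)+1)*(a:ℝ)*q (4*n+4) :=
        mul_pos (mul_pos (by nlinarith) ha0) hq4
      linarith
  intro k
  obtain ⟨hq0, hq1, hq2⟩ := pos k
  have hn : (0:ℝ) ≤ (k:ℝ) := Nat.cast_nonneg k
  have i0 : 4*(k+1) = 4*k+4 := by ring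
  have i1 : 4*(k+1)+1 = 4*k+5 := by omega
  have i2 : 4*(k+1)+2 = 4*k+6 := by omega
  have H2 := h2 (k+1)
  rw [i2, i1, i0] at H2
  push_cast at H2
  have H3 := h3 k
  have H4 := h4 k
  have H5 := h5 k
  have ht2 : (0:ℝ) < t^2 := pow_pos ht0 2
  have ht2A : (0:ℝ) < t^2 + (a:ℝ) := by linarith
  have e6 : q (4*k+6) =
      (9*(4*(k:ℝ)+3)*(4*(k:ℝ)+5)*t^2*(t^2+(a:ℝ))*(t^2+2*(a:ℝ))
        + 3*(4*(k:ℝ)+5)*(6*(k:ℝ)+5)*(a:ℝ)^2*t^2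
        + (6*(k:ℝ)+5)*(6*(k:ℝ)+7)*(a:ℝ)^3) * q (4*k+2)
      + (6*(4*(k:ℝ)+5)*(3*(k:ℝ)+2)*t*(a:ℝ)^2*(t^2+(a:ℝ))) * q (4*k+1) := by
    linear_combination H2 + t * H5 + (3*(4*(k:ℝ)+5)*t^2 + (6*(k:ℝ)+7)*(a:ℝ)) * H4
      + (3*(4*(k:ℝ)+5)*t*(t^2+(a:ℝ))) * H3
  have hq12 : t * q (4*k+1) < q (4*k+2) := by
    rw [h2 k]
    have : (0:ℝ) < (6*(k:ℝ)+1)*(a:ℝ)*q (4*k) :=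
      mul_pos (mul_pos (by positivity) ha0) hq0
    linarith
  have ha12 : (0:ℝ) < 6*(4*(k:ℝ)+5)*(3*(k:ℝ)+2)*t*(a:ℝ)^2*(t^2+(a:ℝ)) :=
    mul_pos (mul_pos (mul_pos (by positivity) ht0) (pow_pos ha0 2)) ht2A
  constructor
  · rw [e6]
    have c1 : (0:ℝ) < 3*(4*(k:ℝ)+5)*(6*(k:ℝ)+5) := by positivity
    have c2 : (0:ℝ) < (6*(k:ℝ)+5)*(6*(k:ℝ)+7) := by positivity
    have d1 : (0:ℝ) < 3*(4*(k:ℝ)+5)*(6*(k:ℝ)+5)*(a:ℝ)^2*t^2 :=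
      mul_pos (mul_pos c1 (pow_pos ha0 2)) ht2
    have d2 : (0:ℝ) < (6*(k:ℝ)+5)*(6*(k:ℝ)+7)*(a:ℝ)^3 := mul_pos c2 (pow_pos ha0 3)
    have P1 : (0:ℝ) < (3*(4*(k:ℝ)+5)*(6*(k:ℝ)+5)*(a:ℝ)^2*t^2
        + (6*(k:ℝ)+5)*(6*(k:ℝ)+7)*(a:ℝ)^3) * q (4*k+2) :=
      mul_pos (by linarith) hq2
    have P2 : (0:ℝ) < 6*(4*(k:ℝ)+5)*(3*(k:ℝ)+2)*t*(a:ℝ)^2*(t^2+(a:ℝ)) * q (4*k+1) :=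
      mul_pos ha12 hq1
    have expand : (9*(4*(k:ℝ)+3)*(4*(k:ℝ)+5)*t^2*(t^2+(a:ℝ))*(t^2+2*(a:ℝ))
        + 3*(4*(k:ℝ)+5)*(6*(k:ℝ)+5)*(a:ℝ)^2*t^2
        + (6*(k:ℝ)+5)*(6*(k:ℝ)+7)*(a:ℝ)^3) * q (4*k+2)
        + (6*(4*(k:ℝ)+5)*(3*(k:ℝ)+2)*t*(a:ℝ)^2*(t^2+(a:ℝ))) * q (4*k+1)
      = 9*(4*(k:ℝ)+3)*(4*(k:ℝ)+5)*t^2*(t^2+(a:ℝ))*(t^2+2*(a:ℝ)) * q (4*k+2)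
        + ((3*(4*(k:ℝ)+5)*(6*(k:ℝ)+5)*(a:ℝ)^2*t^2
            + (6*(k:ℝ)+5)*(6*(k:ℝ)+7)*(a:ℝ)^3) * q (4*k+2)
          + 6*(4*(k:ℝ)+5)*(3*(k:ℝ)+2)*t*(a:ℝ)^2*(t^2+(a:ℝ)) * q (4*k+1)) := by ring
    rw [expand]
    linarith
  · rw [e6]
    have key : (6*(4*(k:ℝ)+5)*(3*(k:ℝ)+2)*t*(a:ℝ)^2*(t^2+(a:ℝ))) * (t * q (4*k+1))
        < (6*(4*(k:ℝ)+5)*(3*(k:ℝ)+2)*t*(a:ℝ)^2*(t^2+(a:ℝ))) * q (4*k+2) :=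
      mul_lt_mul_of_pos_left hq12 ha12
    have hfree : (0:ℝ) < t * (a:ℝ)^3 * (36*(k:ℝ)^2+78*(k:ℝ)+40) * q (4*k+2) :=
      mul_pos (mul_pos (mul_pos ht0 (pow_pos ha0 3)) (by positivity)) hq2
    have ident : t * (9*(4*(k:ℝ)+3)*(4*(k:ℝ)+5)*(t^2+(a:ℝ))^3 * q (4*k+2))
        - t * ((9*(4*(k:ℝ)+3)*(4*(k:ℝ)+5)*t^2*(t^2+(a:ℝ))*(t^2+2*(a:ℝ))
            + 3*(4*(k:ℝ)+5)*(6*(k:ℝ)+5)*(a:ℝ)^2*t^2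
            + (6*(k:ℝ)+5)*(6*(k:ℝ)+7)*(a:ℝ)^3) * q (4*k+2)
          + (6*(4*(k:ℝ)+5)*(3*(k:ℝ)+2)*t*(a:ℝ)^2*(t^2+(a:ℝ))) * q (4*k+1))
        = ((6*(4*(k:ℝ)+5)*(3*(k:ℝ)+2)*t*(a:ℝ)^2*(t^2+(a:ℝ))) * q (4*k+2)
            - (6*(4*(k:ℝ)+5)*(3*(k:ℝ)+2)*t*(a:ℝ)^2*(t^2+(a:ℝ))) * (t * q (4*k+1)))
          + t * (a:ℝ)^3 * (36*(k:ℝ)^2+78*(k:ℝ)+40) * q (4*k+2) := by ring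
    have step : 0 < t * (9*(4*(k:ℝ)+3)*(4*(k:ℝ)+5)*(t^2+(a:ℝ))^3 * q (4*k+2))
        - t * ((9*(4*(k:ℝ)+3)*(4*(k:ℝ)+5)*t^2*(t^2+(a:ℝ))*(t^2+2*(a:ℝ))
            + 3*(4*(k:ℝ)+5)*(6*(k:ℝ)+5)*(a:ℝ)^2*t^2
            + (6*(k:ℝ)+5)*(6*(k:ℝ)+7)*(a:ℝ)^3) * q (4*k+2)
          + (6*(4*(k:ℝ)+5)*(3*(k:ℝ)+2)*t*(a:ℝ)^2*(t^2+(a:ℝ))) * q (4*k+1)) := by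
      rw [ident]; linarith
    by_contra hcon
    push_neg at hcon
    have hmul := mul_le_mul_of_nonneg_left hcon ht0.le
    linarith [step, hmul]
end

section
/- For every integer m ≥ 0, the product P_m = ∏_{j=0}^{m} 4(3j+1)(3j+2)/(d₂(3j+1)·d₂(3j+2)) satisfies P_m ≤ (3m+2)·2^{4m+4}, where d₂(n) denotes the largest odd divisor of n. -/
/-- `d₂ n` is the largest odd divisor of `n`. -/
def d2 (n : ℕ) : ℕ := n / 2 ^ (n.factorization 2)

/-!
Each factor equals `4 · 2^(v₂(3j+1) + v₂(3j+2))`, so `P_m = 4^(m+1) · 2^S` with `S` the total 2-adic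
valuation of the numbers `3j+1, 3j+2` for `j ≤ m`. Since `(3m+3)!` is the product of these numbers and
of `3(j+1)`, we get `S + v₂((m+1)!) = v₂((3m+3)!)`, and Legendre's formula `v₂(n!) = n - s₂(n)` turns
this into `S ≤ 2m + 2 + s₂(m+1)`. Finally `2^(s₂(n)) ≤ n + 1`, because a number with `s` binary ones
is at least `2^s - 1`.
-/

open Finset
open scoped Nat

theorem cast_div_d2 {n : ℕ} (hn : n ≠ 0) : (n : ℚ) / d2 n = 2 ^ padicValNat 2 n := by
  have hsplit := Nat.ordProj_mul_ordCompl_eq_self n 2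
  have hd2 : (d2 n : ℚ) ≠ 0 := by exact_mod_cast (Nat.ordCompl_pos 2 hn).ne'
  rw [div_eq_iff hd2, d2, ← Nat.factorization_def n Nat.prime_two]
  exact_mod_cast hsplit.symm

theorem two_pow_digits_sum_le (n : ℕ) : 2 ^ (Nat.digits 2 n).sum ≤ n + 1 := by
  induction n using Nat.strong_induction_on with
  | _ n ih =>
    rcases Nat.eq_zero_or_pos n with rfl | hn
    · simp
    · have hhalf := ih (n / 2) (Nat.div_lt_self hn one_lt_two)
      rw [Nat.digits_def' one_lt_two hn, List.sum_cons, pow_add]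
      rcases Nat.mod_two_eq_zero_or_one n with h | h <;> rw [h] <;> omega

theorem padicValNat_two_factorial_add_digits_sum (n : ℕ) :
    padicValNat 2 n ! + (Nat.digits 2 n).sum = n := by
  have legendre := sub_one_mul_padicValNat_factorial (p := 2) n
  have := Nat.digit_sum_le 2 n
  omega

theorem factorial_three_mul_succ (n : ℕ) :
    (3 * (n + 1))! = (3 * n + 3) * ((3 * n + 2) * ((3 * n + 1) * (3 * n)!)) := by
  rw [show 3 * (n + 1) = 3 * n + 2 + 1 by ring, Nat.factorial_succ, Nat.factorial_succ,
    Nat.factorial_succ]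

theorem padicValNat_two_factorial_three_mul (n : ℕ) :
    padicValNat 2 (3 * n)! =
      ∑ j ∈ range n, (padicValNat 2 (3 * j + 1) + padicValNat 2 (3 * j + 2)) +
        padicValNat 2 n ! := by
  induction n with
  | zero => simp
  | succ n ih =>
    have hv3 : padicValNat 2 (3 * n + 3) = padicValNat 2 (n + 1) := by
      rw [show 3 * n + 3 = 3 * (n + 1) by ring, padicValNat.mul three_ne_zero n.succ_ne_zero,
        padicValNat.eq_zero_of_not_dvd (by decide), zero_add]
    rw [factorial_three_mul_succ, Nat.factorial_succ, sum_range_succ,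
      padicValNat.mul (by omega) (by positivity), padicValNat.mul (by omega) (by positivity),
      padicValNat.mul (by omega) (by positivity), padicValNat.mul (by omega) (by positivity),
      hv3, ih]
    ring

theorem sum_padicValNat_two_le (m : ℕ) :
    ∑ j ∈ range (m + 1), (padicValNat 2 (3 * j + 1) + padicValNat 2 (3 * j + 2)) ≤
      2 * m + 2 + (Nat.digits 2 (m + 1)).sum := by
  have hfact := padicValNat_two_factorial_three_mul (m + 1)
  have hbig := padicValNat_two_factorial_add_digits_sum (3 * (m + 1))
  have hsmall := padicValNat_two_factorial_add_digits_sum (m + 1)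
  omega

theorem prod_range_div_d2_eq (m : ℕ) :
    ∏ j ∈ range (m + 1),
        (4 * (3 * (j : ℚ) + 1) * (3 * (j : ℚ) + 2)) / ((d2 (3 * j + 1) : ℚ) * (d2 (3 * j + 2) : ℚ))
      = 4 ^ (m + 1) *
          2 ^ ∑ j ∈ range (m + 1), (padicValNat 2 (3 * j + 1) + padicValNat 2 (3 * j + 2)) := by
  have hcard : (4 : ℚ) ^ (m + 1) = 4 ^ #(range (m + 1)) := by rw [card_range]
  rw [← prod_pow_eq_pow_sum, hcard, pow_card_mul_prod]
  refine prod_congr rfl fun j _ => ?_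
  have h1 := cast_div_d2 (n := 3 * j + 1) (by omega)
  have h2 := cast_div_d2 (n := 3 * j + 2) (by omega)
  push_cast at h1 h2
  rw [mul_assoc, mul_div_assoc, mul_div_mul_comm, h1, h2, pow_add]

/-- For every integer `m ≥ 0`, the product
`P_m = ∏_{j=0}^{m} 4(3j+1)(3j+2)/(d₂(3j+1)·d₂(3j+2))` satisfies
`P_m ≤ (3m+2)·2^{4m+4}`, where `d₂(n)` denotes the largest odd divisor of `n`. -/
theorem product_P_bound (m : ℕ) :
    ∏ j ∈ Finset.range (m + 1),
        (4 * (3 * (j : ℚ) + 1) * (3 * (j : ℚ) + 2)) / ((d2 (3 * j + 1) : ℚ) * (d2 (3 * j + 2) : ℚ))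
      ≤ (3 * (m : ℚ) + 2) * 2 ^ (4 * m + 4) := by
  rw [prod_range_div_d2_eq]
  set S := ∑ j ∈ range (m + 1), (padicValNat 2 (3 * j + 1) + padicValNat 2 (3 * j + 2))
  have hS : 2 ^ S ≤ 2 ^ (2 * m + 2) * (m + 2) :=
    calc 2 ^ S ≤ 2 ^ (2 * m + 2 + (Nat.digits 2 (m + 1)).sum) :=
          Nat.pow_le_pow_right two_pos (sum_padicValNat_two_le m)
      _ ≤ 2 ^ (2 * m + 2) * (m + 2) := by
          rw [pow_add]
          exact Nat.mul_le_mul_left _ (two_pow_digits_sum_le (m + 1))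
  have hnat : 4 ^ (m + 1) * 2 ^ S ≤ (3 * m + 2) * 2 ^ (4 * m + 4) :=
    calc 4 ^ (m + 1) * 2 ^ S ≤ 4 ^ (m + 1) * (2 ^ (2 * m + 2) * (m + 2)) :=
          Nat.mul_le_mul_left _ hS
      _ = (m + 2) * 2 ^ (4 * m + 4) := by
          rw [show 4 = 2 ^ 2 by rfl, ← pow_mul]
          ring
      _ ≤ (3 * m + 2) * 2 ^ (4 * m + 4) := Nat.mul_le_mul_right _ (by omega)
  exact_mod_cast hnat
end
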